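/- arXiv:1506.09145 — 2 statements merged into one kernel-verified Lean document; each statement's English description precedes it below -/
import Mathlib

section
/- In any 3-track layout of a graph, for any cycle C with a cyclic orientation, the sum of δ over the arcs of C equals 0 if C has even length, and has absolute value 3 if C has odd length. Here δ(uv) = +1 if the arc uv goes from track i to track i+1 (mod 3), and δ(uv) = -1 otherwise. -/
open SimpleGraph

universe u

variable {V : Type u}

/-- A `k`-track layout of a graph `G`: a partition of the vertices into `k`
linearly ordered independent sets (tracks, with order given by `pos`),
such that the edges between each pair of tracks are non-crossing. -/
structure TrackLayout (G : SimpleGraph V) (k : ℕ) where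
  track : V → Fin k
  pos : V → ℕ
  pos_inj : ∀ u v : V, track u = track v → pos u = pos v → u = v
  indep : ∀ u v : V, G.Adj u v → track u ≠ track v
  noncross : ∀ u v u' v' : V, G.Adj u v → G.Adj u' v' →
    track u = track u' → track v = track v' →
    pos u < pos u' → ¬ (pos v' < pos v)

/-- The track-number of `G`: the minimum `k` such that `G` has a `k`-track layout. -/
noncomputable def trackNumber (G : SimpleGraph V) : ℕ :=
  sInf {k | Nonempty (TrackLayout G k)}

/-- `δ` of an arc `uv` in a 3-track layout: `+1` if it goes from track `i` to
track `i+1 (mod 3)`, and `-1` otherwise. -/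
def trackDelta {G : SimpleGraph V} (T : TrackLayout G 3) (u v : V) : ℤ :=
  if T.track v = T.track u + 1 then 1 else -1

/-- Sum of `δ` over the arcs of a walk in a 3-track layout. -/
def walkDelta {G : SimpleGraph V} (T : TrackLayout G 3) :
    ∀ {u v : V}, G.Walk u v → ℤ
  | _, _, SimpleGraph.Walk.nil => 0
  | _, _, @SimpleGraph.Walk.cons _ _ a b _ _ p => trackDelta T a b + walkDelta T p

/-- A leveled planar drawing of `G` (combinatorially): vertices assigned to
levels with every edge joining consecutive levels, and vertices linearly
ordered within each level (by `pos`) so that no two edges cross. -/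
structure LeveledPlanarDrawing (G : SimpleGraph V) where
  level : V → ℤ
  pos : V → ℕ
  pos_inj : ∀ u v : V, level u = level v → pos u = pos v → u = v
  edge_level : ∀ u v : V, G.Adj u v → |level u - level v| = 1
  noncross : ∀ u v u' v' : V, G.Adj u v → G.Adj u' v' →
    level u = level u' → level v = level v' →
    pos u < pos u' → ¬ (pos v' < pos v)

/-- A graph is leveled planar if it admits a leveled planar drawing. -/
def IsLeveledPlanar (G : SimpleGraph V) : Prop := Nonempty (LeveledPlanarDrawing G)

/-- A weakly leveled planar drawing of `G`: like a leveled planar drawing,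
but edges may also join two consecutive vertices of the same level. -/
structure WeaklyLeveledPlanarDrawing (G : SimpleGraph V) where
  level : V → ℤ
  pos : V → ℕ
  pos_inj : ∀ u v : V, level u = level v → pos u = pos v → u = v
  edge_level : ∀ u v : V, G.Adj u v → |level u - level v| ≤ 1
  noncross : ∀ u v u' v' : V, G.Adj u v → G.Adj u' v' →
    level u = level u' → level v = level v' → level u ≠ level v →
    pos u < pos u' → ¬ (pos v' < pos v)
  same_level_consecutive : ∀ u v : V, G.Adj u v → level u = level v → pos u < pos v →
    ∀ w : V, level w = level u → ¬ (pos u < pos w ∧ pos w < pos v)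

/-- A path decomposition of `G`: a sequence of bags such that every vertex lies in a
nonempty contiguous subsequence of bags and every edge lies in some bag. -/
structure PathDecomp (G : SimpleGraph V) where
  bags : ℕ → Set V
  mem_bag : ∀ v : V, ∃ i, v ∈ bags i
  contiguous : ∀ (v : V) (i j k : ℕ), i ≤ j → j ≤ k → v ∈ bags i → v ∈ bags k → v ∈ bags j
  edge_bag : ∀ u v : V, G.Adj u v → ∃ i, u ∈ bags i ∧ v ∈ bags i

/-- A layering of `G`: each edge joins vertices in the same or consecutive layers. -/
def IsLayering (G : SimpleGraph V) (lev : V → ℤ) : Prop :=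
  ∀ u v : V, G.Adj u v → |lev u - lev v| ≤ 1

/-- `G` has layered pathwidth at most `k`: some path decomposition and layering
where every bag meets every layer in at most `k` vertices. -/
def LayeredPathwidthLE (G : SimpleGraph V) (k : ℕ) : Prop :=
  ∃ (P : PathDecomp G) (lev : V → ℤ), IsLayering G lev ∧
    ∀ (i : ℕ) (l : ℤ), {v | v ∈ P.bags i ∧ lev v = l}.ncard ≤ k

noncomputable def layeredPathwidth (G : SimpleGraph V) : ℕ :=
  sInf {k | LayeredPathwidthLE G k}

/-- `G` has pathwidth at most `k`: some path decomposition with all bags of size at most `k+1`. -/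
def PathwidthLE (G : SimpleGraph V) (k : ℕ) : Prop :=
  ∃ P : PathDecomp G, ∀ i, (P.bags i).ncard ≤ k + 1

noncomputable def pathwidth (G : SimpleGraph V) : ℕ :=
  sInf {k | PathwidthLE G k}

/-- A tree decomposition of `G`. -/
structure TreeDecomp (G : SimpleGraph V) where
  ι : Type u
  T : SimpleGraph ι
  isTree : T.IsTree
  bags : ι → Set V
  edge_bag : ∀ u v : V, G.Adj u v → ∃ i, u ∈ bags i ∧ v ∈ bags i
  subtree : ∀ v : V, (T.induce {i | v ∈ bags i}).Connected

/-- `G` has layered treewidth at most `k`. -/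
def LayeredTreewidthLE (G : SimpleGraph V) (k : ℕ) : Prop :=
  ∃ (D : TreeDecomp G) (lev : V → ℤ), IsLayering G lev ∧
    ∀ (i : D.ι) (l : ℤ), {v | v ∈ D.bags i ∧ lev v = l}.ncard ≤ k

/-- `G` has tree-depth at most `d`: the vertices embed injectively into a rooted forest
(nodes = nonempty lists, ancestor = prefix) of height at most `d`, with every edge
joining an ancestor-descendant pair. -/
def TreedepthLE (G : SimpleGraph V) (d : ℕ) : Prop :=
  ∃ f : V → List ℕ, Function.Injective f ∧
    (∀ v : V, f v ≠ [] ∧ (f v).length ≤ d) ∧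
    ∀ u v : V, G.Adj u v → ((f u <+: f v) ∨ (f v <+: f u))

noncomputable def treedepth (G : SimpleGraph V) : ℕ :=
  sInf {d | TreedepthLE G d}

/-- A caterpillar: a tree having a path (the spine) containing all non-leaf vertices. -/
def IsCaterpillar (G : SimpleGraph V) : Prop :=
  G.IsTree ∧ ∃ (n : ℕ) (f : ℕ → V),
    (∀ i, i < n → G.Adj (f i) (f (i+1))) ∧
    (∀ i j, i ≤ n → j ≤ n → f i = f j → i = j) ∧
    ∀ v : V, (∃ a b : V, a ≠ b ∧ G.Adj v a ∧ G.Adj v b) → ∃ i, i ≤ n ∧ f i = v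

/-- The subgraph of edges between tracks `a` and `b` of a track layout. -/
def betweenTracks (G : SimpleGraph V) {k : ℕ} (T : TrackLayout G k) (a b : Fin k) :
    SimpleGraph V where
  Adj u v := G.Adj u v ∧
    ((T.track u = a ∧ T.track v = b) ∨ (T.track u = b ∧ T.track v = a))
  symm := by
    constructor
    intro u v h
    exact ⟨h.1.symm, by tauto⟩
  loopless := by
    constructor
    intro u h
    exact G.irrefl h.1

/-- Outerplanarity, via one-page book embeddings: the vertices can be linearly
ordered so that no two edges cross. -/
def IsOuterplanar (G : SimpleGraph V) : Prop :=
  ∃ f : V → ℕ, Function.Injective f ∧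
    ∀ u v x y : V, G.Adj u v → G.Adj x y →
      ¬ (f u < f x ∧ f x < f v ∧ f v < f y)

/-- The complete binary tree of height `h`: vertices are binary strings of length
at most `h`, with edges from each string to its one-letter extensions. -/
def completeBinaryTree (h : ℕ) : SimpleGraph {l : List Bool // l.length ≤ h} where
  Adj u v := (∃ b, (v : List Bool) = (u : List Bool) ++ [b]) ∨
    (∃ b, (u : List Bool) = (v : List Bool) ++ [b])
  symm := by constructor; intro u v h'; tauto
  loopless := by
    constructor
    intro u h'
    rcases h' with ⟨b, hb⟩ | ⟨b, hb⟩ <;>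
      · have := congrArg List.length hb
        simp at this

/-- Add an apex (universal vertex `none`) to a graph. -/
def apexGraph {α : Type u} (G : SimpleGraph α) : SimpleGraph (Option α) where
  Adj u v :=
    (∃ a b, u = some a ∧ v = some b ∧ G.Adj a b) ∨
    (u = none ∧ ∃ b, v = some b) ∨
    (v = none ∧ ∃ a, u = some a)
  symm := by
    constructor
    rintro u v (⟨a, b, rfl, rfl, hab⟩ | ⟨rfl, b, rfl⟩ | ⟨h1, a, rfl⟩)
    · exact Or.inl ⟨b, a, rfl, rfl, hab.symm⟩
    · exact Or.inr (Or.inr ⟨rfl, b, rfl⟩)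
    · subst h1; exact Or.inr (Or.inl ⟨rfl, a, rfl⟩)
  loopless := by
    constructor
    rintro u (⟨a, b, h1, h2, hab⟩ | ⟨h1, b, h2⟩ | ⟨h1, a, h2⟩)
    · rw [h1] at h2; cases h2; exact G.irrefl hab
    · rw [h1] at h2; cases h2
    · rw [h2] at h1; cases h1


/-!
Record the cycle as a closed polygon in the plane `Fin 3 × ℕ` of (track, position) pairs.
The `δ` of an arc is the difference of the track indices of its ends plus three times its
signed number of passages from track 2 to track 0, so around the cycle `Σ δ = 3 W` for the
winding number `W`; and `Σ δ ≡ |C| (mod 2)` because `δ = ±1`. It remains to show `|W| ≤ 1`.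
The arcs between tracks 2 and 0 do not cross, so they are linearly ordered, and two consecutive
ones cannot point the same way: reconnecting the cycle at them splits it into two disjoint
closed polygons that cross exactly once, at the two new segments, whereas two disjoint closed
polygons in a 3-track drawing always cross an even number of times. So the signs alternate
along the order and `W ∈ {-1, 0, 1}`.
-/

open Finset Function

section Segments

variable {τ : Type*}

-- `(t, x) : τ × ℕ` is the point at position `x` on track `t`.
abbrev Crosses (p q r s : τ × ℕ) : Prop :=
  p.1 = r.1 ∧ q.1 = s.1 ∧ (p.2 < r.2 ∧ s.2 < q.2 ∨ r.2 < p.2 ∧ q.2 < s.2)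

abbrev SegmentsCross (p q r s : τ × ℕ) : Prop :=
  Crosses p q r s ∨ Crosses p q s r

theorem SegmentsCross.symm {p q r s : τ × ℕ} (h : SegmentsCross p q r s) :
    SegmentsCross r s p q := by
  grind

theorem SegmentsCross.tracks {p q r s : τ × ℕ} (h : SegmentsCross p q r s) :
    p.1 = r.1 ∧ q.1 = s.1 ∨ p.1 = s.1 ∧ q.1 = r.1 := by
  tauto

def SegBelow (p q r s : τ × ℕ) : Prop :=
  ∀ x ∈ [p, q], ∀ y ∈ [r, s], x.1 = y.1 → x.2 ≤ y.2

theorem SegBelow.not_segmentsCross {p q r s : τ × ℕ} (h : SegBelow p q r s) :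
    ¬ SegmentsCross p q r s := by
  rintro (⟨h₁, h₂, h₃⟩ | ⟨h₁, h₂, h₃⟩)
  · have := h p (by simp) r (by simp) h₁
    have := h q (by simp) s (by simp) h₂
    omega
  · have := h p (by simp) s (by simp) h₁
    have := h q (by simp) r (by simp) h₂
    omega

theorem not_segmentsCross_of_segBelow {p q r s : τ × ℕ}
    (h : SegBelow p q r s ∨ SegBelow r s p q) : ¬ SegmentsCross p q r s :=
  h.elim SegBelow.not_segmentsCross fun h hx => h.not_segmentsCross hx.symm

theorem SegBelow.mix_left {p q p' q' r s : τ × ℕ} (h : SegBelow p q r s)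
    (h' : SegBelow p' q' r s) : SegBelow p q' r s := by
  intro x hx
  simp only [List.mem_cons, List.not_mem_nil, or_false] at hx
  rcases hx with rfl | rfl
  exacts [h x (by simp), h' x (by simp)]

theorem SegBelow.mix_right {p q r s r' s' : τ × ℕ} (h : SegBelow p q r s)
    (h' : SegBelow p q r' s') : SegBelow p q r s' := by
  intro x hx y hy
  simp only [List.mem_cons, List.not_mem_nil, or_false] at hy
  rcases hy with rfl | rfl
  exacts [h x hx y (by simp), h' x hx y (by simp)]

theorem SegBelow.eq_of_segBelow {p q r s : τ × ℕ} (h : SegBelow p q r s)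
    (h' : SegBelow r s p q) : ∀ x ∈ [p, q], ∀ y ∈ [r, s], x.1 = y.1 → x = y :=
  fun x hx y hy hxy => Prod.ext hxy (le_antisymm (h x hx y hy hxy) (h' y hy x hx hxy.symm))

-- Two non-crossing segments between the same two tracks are ordered on both tracks at once,
-- so the sums of their endpoint positions compare them.
theorem segBelow_of_add_le {a b : τ} {p q r s : τ × ℕ}
    (hp : p.1 = a ∧ q.1 = b ∨ p.1 = b ∧ q.1 = a) (hr : r.1 = a ∧ s.1 = b ∨ r.1 = b ∧ s.1 = a)
    (hcross : ¬ SegmentsCross p q r s) (hle : p.2 + q.2 ≤ r.2 + s.2) : SegBelow p q r s := by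
  intro x hx y hy hxy
  simp only [List.mem_cons, List.not_mem_nil, or_false] at hx hy
  rcases hx with rfl | rfl <;> rcases hy with rfl | rfl <;> grind

end Segments

namespace ZMod

variable {n : ℕ}

theorem natCast_inj_of_lt {a b : ℕ} (ha : a < n) (hb : b < n) (h : (a : ZMod n) = b) :
    a = b := by
  simpa [val_cast_of_lt ha, val_cast_of_lt hb] using congrArg val h

theorem val_add_one_of_ne_neg_one [NeZero n] {k : ZMod n} (hk : k ≠ -1) :
    (k + 1).val = k.val + 1 := by
  have h : (k + 1).val = (k.val + 1) % n := by rw [val_add, val_one_eq_one_mod, Nat.add_mod_mod]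
  have hne : k.val + 1 ≠ n := fun h' =>
    hk (eq_neg_of_add_eq_zero_left (by rw [← val_eq_zero, h, h', Nat.mod_self]))
  rw [h, Nat.mod_eq_of_lt (by have := val_lt k; omega)]

theorem val_neg_one_of_neZero [NeZero n] : (-1 : ZMod n).val = n - 1 := by
  obtain ⟨n, rfl⟩ := Nat.exists_eq_succ_of_ne_zero (NeZero.ne n)
  exact val_neg_one n

theorem sum_comp_add_one [NeZero n] {M : Type*} [AddCommMonoid M] (g : ZMod n → M) :
    ∑ i, g (i + 1) = ∑ i, g i :=
  Equiv.sum_comp (Equiv.addRight 1) g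

theorem sum_comp_add_one_sub_one [NeZero n] {M : Type*} [AddCommMonoid M]
    (f : ZMod n → ZMod n → M) :
    ∑ i, f (i + 1) i = ∑ i, f i (i - 1) := by
  simpa using sum_comp_add_one fun i => f i (i - 1)

theorem sum_val_eq_sum_range [NeZero n] {M : Type*} [AddCommMonoid M] (g : ℕ → M) :
    ∑ k : ZMod n, g k.val = ∑ k ∈ range n, g k := by
  obtain ⟨n, rfl⟩ := Nat.exists_eq_succ_of_ne_zero (NeZero.ne n)
  exact Fin.sum_univ_eq_sum_range g (n + 1)

end ZMod

section Parity

variable {n m : ℕ}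

def belowIndicator (p p' q q' : Fin 3 × ℕ) : ZMod 2 :=
  if p.1 = q.1 ∧ p'.1 = q'.1 ∧ p.2 < q.2 then 1 else 0

-- Matched endpoints have distinct positions, so the segments cross iff exactly one of the two
-- matched comparisons holds.
theorem segmentsCross_indicator {p q r s : Fin 3 × ℕ} (hpq : p.1 ≠ q.1) (hrs : r.1 ≠ s.1)
    (hpr : p ≠ r) (hps : p ≠ s) (hqr : q ≠ r) (hqs : q ≠ s) :
    (if SegmentsCross p q r s then 1 else 0 : ZMod 2) =
      belowIndicator p q r s + belowIndicator p q s r + belowIndicator q p r s +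
        belowIndicator q p s r := by
  rcases p with ⟨p₁, p₂⟩; rcases q with ⟨q₁, q₂⟩; rcases r with ⟨r₁, r₂⟩; rcases s with ⟨s₁, s₂⟩
  simp only [ne_eq, Prod.mk.injEq, not_and] at *
  simp only [SegmentsCross, Crosses, belowIndicator]
  have two : (1 : ZMod 2) + 1 = 0 := rfl
  by_cases hA : p₁ = r₁ ∧ q₁ = s₁
  · obtain ⟨rfl, rfl⟩ := hA
    rcases Nat.lt_or_gt_of_ne (hpr rfl) with h₁ | h₁ <;>
      rcases Nat.lt_or_gt_of_ne (hqs rfl) with h₂ | h₂ <;>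
      simp [h₁, h₂, h₁.not_gt, h₂.not_gt, hpq, two]
  by_cases hB : p₁ = s₁ ∧ q₁ = r₁
  · obtain ⟨rfl, rfl⟩ := hB
    rcases Nat.lt_or_gt_of_ne (hps rfl) with h₁ | h₁ <;>
      rcases Nat.lt_or_gt_of_ne (hqr rfl) with h₂ | h₂ <;>
      simp [h₁, h₂, h₁.not_gt, h₂.not_gt, hpq, hrs, two]
  rw [if_neg (by tauto), if_neg (by tauto), if_neg (by tauto), if_neg (by tauto),
    if_neg (by tauto)]
  simp

-- The four neighbour tracks all avoid the common track of `p` and `q`, so they take only two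
-- values, and the number of matching pairs among them is even.
theorem belowIndicator_neighbours {p p₁ p₂ q q₁ q₂ : Fin 3 × ℕ} (h₁ : p₁.1 ≠ p.1)
    (h₂ : p₂.1 ≠ p.1) (h₃ : q₁.1 ≠ q.1) (h₄ : q₂.1 ≠ q.1) :
    belowIndicator p p₁ q q₁ + belowIndicator p p₁ q q₂ + belowIndicator p p₂ q q₁ +
      belowIndicator p p₂ q q₂ = 0 := by
  have key : ∀ z a b c d : Fin 3, a ≠ z → b ≠ z → c ≠ z → d ≠ z →
      ((if a = c then 1 else 0) + (if a = d then 1 else 0) + (if b = c then 1 else 0) +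
        (if b = d then 1 else 0) : ZMod 2) = 0 := by decide
  unfold belowIndicator
  by_cases h : p.1 = q.1 ∧ p.2 < q.2
  · simpa [h.1, h.2] using key q.1 p₁.1 p₂.1 q₁.1 q₂.1 (h.1 ▸ h₁) (h.1 ▸ h₂) h₃ h₄
  · grind

-- Mod 2 each crossing splits into `belowIndicator` terms; regrouped around the pairs of
-- vertices `c i`, `d j`, they cancel by `belowIndicator_neighbours`.
theorem sum_segmentsCross_eq_zero [NeZero n] [NeZero m] {c : ZMod n → Fin 3 × ℕ}
    {d : ZMod m → Fin 3 × ℕ} (hc : ∀ i, (c i).1 ≠ (c (i + 1)).1)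
    (hd : ∀ j, (d j).1 ≠ (d (j + 1)).1) (hcd : ∀ i j, c i ≠ d j) :
    ∑ i, ∑ j, (if SegmentsCross (c i) (c (i + 1)) (d j) (d (j + 1)) then 1 else 0 : ZMod 2) =
      0 := by
  set B : ZMod n → ZMod n → ZMod m → ZMod m → ZMod 2 :=
    fun i i' j j' => belowIndicator (c i) (c i') (d j) (d j')
  have shift : ∀ i i', ∑ j, B i i' (j + 1) j = ∑ j, B i i' j (j - 1) :=
    fun i i' => ZMod.sum_comp_add_one_sub_one (B i i')
  calc _ = ∑ i, ∑ j, (B i (i + 1) j (j + 1) + B i (i + 1) (j + 1) j + B (i + 1) i j (j + 1) +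
          B (i + 1) i (j + 1) j) :=
        sum_congr rfl fun i _ => sum_congr rfl fun j _ =>
          segmentsCross_indicator (hc i) (hd j) (hcd _ _) (hcd _ _) (hcd _ _) (hcd _ _)
    _ = ∑ i, ∑ j, (B i (i + 1) j (j + 1) + B i (i + 1) j (j - 1) + B i (i - 1) j (j + 1) +
          B i (i - 1) j (j - 1)) := by
        simp only [sum_add_distrib]
        rw [ZMod.sum_comp_add_one_sub_one fun i i' => ∑ j, B i i' j (j + 1),
          ZMod.sum_comp_add_one_sub_one fun i i' => ∑ j, B i i' (j + 1) j]
        simp only [shift]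
    _ = 0 := by
        refine sum_eq_zero fun i _ => sum_eq_zero fun j _ => belowIndicator_neighbours ?_ ?_ ?_ ?_
        · exact (hc i).symm
        · simpa using hc (i - 1)
        · exact (hd j).symm
        · simpa using hd (j - 1)

theorem exists_other_segmentsCross [NeZero n] [NeZero m] {c : ZMod n → Fin 3 × ℕ}
    {d : ZMod m → Fin 3 × ℕ} (hc : ∀ i, (c i).1 ≠ (c (i + 1)).1)
    (hd : ∀ j, (d j).1 ≠ (d (j + 1)).1) (hcd : ∀ i j, c i ≠ d j) {i : ZMod n} {j : ZMod m}
    (h : SegmentsCross (c i) (c (i + 1)) (d j) (d (j + 1))) :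
    ∃ i' j', (i', j') ≠ (i, j) ∧ SegmentsCross (c i') (c (i' + 1)) (d j') (d (j' + 1)) := by
  refine by_contra fun hu => ?_
  have hsum := sum_segmentsCross_eq_zero hc hd hcd
  rw [← Fintype.sum_prod_type', Fintype.sum_eq_single (i, j)
    fun x hx => if_neg fun hx' => hu ⟨x.1, x.2, hx, hx'⟩, if_pos h] at hsum
  exact one_ne_zero hsum

end Parity

section ArcLoop

variable {α : Type*} {n : ℕ} {i j : ZMod n}

theorem ZMod.neZero_val_sub (hij : i ≠ j) : NeZero (j - i).val :=
  ⟨(ZMod.val_pos.mpr (sub_ne_zero.mpr hij.symm)).ne'⟩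

-- The closed polygon `c (i + 1), …, c j`: indexing by `ZMod (j - i).val` adds the closing
-- segment from `c j` back to `c (i + 1)`.
def arcLoop (c : ZMod n → α) (i j : ZMod n) (k : ZMod (j - i).val) : α :=
  c (i + 1 + k.val)

variable (c : ZMod n → α)

theorem arcLoop_neg_one_add_one : arcLoop c i j (-1 + 1) = c (i + 1) := by
  rw [neg_add_cancel, arcLoop, ZMod.val_zero, Nat.cast_zero, add_zero]

theorem arcLoop_neg_one [NeZero n] (hij : i ≠ j) : arcLoop c i j (-1) = c j := by
  have := ZMod.neZero_val_sub hij
  rw [arcLoop, ZMod.val_neg_one_of_neZero, Nat.cast_sub NeZero.one_le, ZMod.natCast_zmod_val,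
    Nat.cast_one]
  ring_nf

theorem arcLoop_add_one (hij : i ≠ j) {k : ZMod (j - i).val} (hk : k ≠ -1) :
    arcLoop c i j (k + 1) = c (i + 1 + k.val + 1) := by
  have := ZMod.neZero_val_sub hij
  rw [arcLoop, ZMod.val_add_one_of_ne_neg_one hk, Nat.cast_succ, add_assoc (i + 1)]

theorem arcLoop_rel [NeZero n] {R : α → α → Prop} {c : ZMod n → α}
    (hc : ∀ k, R (c k) (c (k + 1))) (hij : i ≠ j) (hclose : R (c j) (c (i + 1)))
    (k : ZMod (j - i).val) :
    R (arcLoop c i j k) (arcLoop c i j (k + 1)) := by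
  by_cases hk : k = -1
  · rw [hk, arcLoop_neg_one c hij, arcLoop_neg_one_add_one]
    exact hclose
  · rw [arcLoop_add_one c hij hk]
    exact hc _

theorem add_one_add_val_ne [NeZero n] (hij : i ≠ j) {k : ZMod (j - i).val} (hk : k ≠ -1) :
    i + 1 + k.val ≠ i ∧ i + 1 + k.val ≠ j := by
  have := ZMod.neZero_val_sub hij
  have hk' := ZMod.val_add_one_of_ne_neg_one hk ▸ ZMod.val_lt (k + 1)
  have hl := ZMod.val_lt (j - i)
  constructor
  · intro h
    have h' : ((1 + k.val : ℕ) : ZMod n) = ((0 : ℕ) : ZMod n) := by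
      push_cast; linear_combination h
    have := ZMod.natCast_inj_of_lt (by omega) (by omega) h'
    omega
  · intro h
    have h' : ((1 + k.val : ℕ) : ZMod n) = ((j - i).val : ZMod n) := by
      rw [ZMod.natCast_zmod_val]; push_cast; linear_combination h
    have := ZMod.natCast_inj_of_lt (by omega) hl h'
    omega

theorem arcLoop_ne_arcLoop [NeZero n] {c : ZMod n → α} (hc : Injective c) (hij : i ≠ j)
    (k : ZMod (j - i).val) (k' : ZMod (i - j).val) : arcLoop c i j k ≠ arcLoop c j i k' := by
  intro h
  have := ZMod.neZero_val_sub hij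
  have := ZMod.neZero_val_sub hij.symm
  have hsum : (j - i).val + (i - j).val = n := by
    rw [← neg_sub j i, ZMod.neg_val, if_neg (sub_ne_zero.mpr hij.symm)]
    have := ZMod.val_lt (j - i)
    omega
  have h₁ := ZMod.val_lt k
  have h₂ := ZMod.val_lt k'
  have h' : ((k.val : ℕ) : ZMod n) = (((j - i).val + k'.val : ℕ) : ZMod n) := by
    push_cast; rw [ZMod.natCast_zmod_val]; linear_combination hc h
  have := ZMod.natCast_inj_of_lt (by omega) (by omega) h'
  omega

end ArcLoop

structure IsTrackCycle {n : ℕ} (c : ZMod n → Fin 3 × ℕ) : Prop where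
  fst_ne : ∀ i, (c i).1 ≠ (c (i + 1)).1
  injective : Injective c
  not_segmentsCross : ∀ i j, ¬ SegmentsCross (c i) (c (i + 1)) (c j) (c (j + 1))

namespace IsTrackCycle

variable {n : ℕ} [NeZero n] {c : ZMod n → Fin 3 × ℕ}

-- Reconnecting `c` at its segments `i` and `j` gives the disjoint closed polygons
-- `arcLoop c i j` and `arcLoop c j i`; if their closing segments crossed each other and nothing
-- else, these would cross exactly once.
theorem not_segmentsCross_reconnection (hc : IsTrackCycle c) {i j : ZMod n} (hij : i ≠ j)
    (hi : (c i).1 ≠ (c (j + 1)).1) (hj : (c j).1 ≠ (c (i + 1)).1)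
    (hold₁ : ∀ k, k ≠ i → k ≠ j → ¬ SegmentsCross (c k) (c (k + 1)) (c j) (c (i + 1)))
    (hold₂ : ∀ k, k ≠ i → k ≠ j → ¬ SegmentsCross (c k) (c (k + 1)) (c i) (c (j + 1))) :
    ¬ SegmentsCross (c j) (c (i + 1)) (c i) (c (j + 1)) := by
  intro hnew
  have := ZMod.neZero_val_sub hij
  have := ZMod.neZero_val_sub hij.symm
  obtain ⟨k₁, k₂, hne, hk⟩ := exists_other_segmentsCross
    (arcLoop_rel (R := fun x y : Fin 3 × ℕ => x.1 ≠ y.1) hc.fst_ne hij hj)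
    (arcLoop_rel (R := fun x y : Fin 3 × ℕ => x.1 ≠ y.1) hc.fst_ne hij.symm hi)
    (arcLoop_ne_arcLoop hc.injective hij) (i := -1) (j := -1)
    (by rwa [arcLoop_neg_one c hij, arcLoop_neg_one c hij.symm, arcLoop_neg_one_add_one,
      arcLoop_neg_one_add_one])
  by_cases h₁ : k₁ = -1 <;> by_cases h₂ : k₂ = -1
  · exact hne (by rw [h₁, h₂])
  · rw [h₁, arcLoop_neg_one c hij, arcLoop_neg_one_add_one, arcLoop_add_one c hij.symm h₂] at hk
    obtain ⟨hkj, hki⟩ := add_one_add_val_ne hij.symm h₂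
    exact hold₁ _ hki hkj hk.symm
  · rw [h₂, arcLoop_neg_one c hij.symm, arcLoop_neg_one_add_one, arcLoop_add_one c hij h₁] at hk
    obtain ⟨hki, hkj⟩ := add_one_add_val_ne hij h₁
    exact hold₂ _ hki hkj hk
  · rw [arcLoop_add_one c hij h₁, arcLoop_add_one c hij.symm h₂] at hk
    exact hc.not_segmentsCross _ _ hk

end IsTrackCycle

section CutSign

variable {τ : Type*} [DecidableEq τ]

def cutSign (a b s t : τ) : ℤ :=
  if s = a ∧ t = b then 1 else if s = b ∧ t = a then -1 else 0

theorem cutSign_ne_zero_iff {a b s t : τ} :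
    cutSign a b s t ≠ 0 ↔ s = a ∧ t = b ∨ s = b ∧ t = a := by
  unfold cutSign
  split_ifs <;> simp_all

theorem cutSign_eq_one_or_eq_neg_one {a b s t : τ} (h : cutSign a b s t ≠ 0) :
    cutSign a b s t = 1 ∨ cutSign a b s t = -1 := by
  unfold cutSign at *
  split_ifs at * <;> simp_all

theorem eq_and_eq_of_cutSign_eq {a b s t s' t' : τ} (h₀ : cutSign a b s t ≠ 0)
    (h : cutSign a b s t = cutSign a b s' t') : s = s' ∧ t = t' := by
  unfold cutSign at *
  split_ifs at * <;> simp_all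

end CutSign

theorem abs_sum_le_one_of_alternating {ι α : Type*} [DecidableEq ι] [LinearOrder α]
    (S : Finset ι) (key : ι → α) (σ : ι → ℤ) (hσ : ∀ i ∈ S, σ i = 1 ∨ σ i = -1)
    (hkey : Set.InjOn key S)
    (halt : ∀ i ∈ S, ∀ j ∈ S, key i < key j → σ i = σ j →
      ∃ k ∈ S, key i < key k ∧ key k < key j) :
    |∑ i ∈ S, σ i| ≤ 1 := by
  suffices h : ∑ i ∈ S, σ i = 0 ∨ ∃ m ∈ S, (∀ x ∈ S, key x ≤ key m) ∧ ∑ i ∈ S, σ i = σ m by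
    rcases h with h | ⟨m, hm, -, h⟩
    · simp [h]
    · rcases hσ m hm with h' | h' <;> simp [h, h']
  induction S using Finset.induction_on_max_value key with
  | empty => simp
  | insert a s ha hmax ih =>
    have hmem : ∀ x ∈ s, x ∈ insert a s := fun x => mem_insert_of_mem
    rw [sum_insert ha]
    rcases ih (fun x hx => hσ x (hmem x hx)) (hkey.mono (by simp))
        (fun x hx y hy hxy he => by
          obtain ⟨k, hk, h₁, h₂⟩ := halt x (hmem x hx) y (hmem y hy) hxy he
          rcases mem_insert.mp hk with rfl | hk
          · exact absurd (hmax y hy) (not_le.mpr h₂)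
          · exact ⟨k, hk, h₁, h₂⟩) with h | ⟨m, hm, hmmax, h⟩
    · exact Or.inr ⟨a, mem_insert_self a s,
        fun x hx => (mem_insert.mp hx).elim (fun h => h ▸ le_rfl) (hmax x), by simp [h]⟩
    · left
      have hlt : key m < key a := lt_of_le_of_ne (hmax m hm) fun h' =>
        ha (hkey (hmem m hm) (mem_insert_self a s) h' ▸ hm)
      have hne : σ m ≠ σ a := fun he => by
        obtain ⟨k, hk, h₁, h₂⟩ := halt m (hmem m hm) a (mem_insert_self a s) hlt he
        rcases mem_insert.mp hk with rfl | hk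
        · exact lt_irrefl _ h₂
        · exact not_le.mpr h₁ (hmmax k hk)
      have := hσ a (mem_insert_self a s)
      have := hσ m (hmem m hm)
      omega

namespace IsTrackCycle

variable {n : ℕ} {c : ZMod n → Fin 3 × ℕ} {a b : Fin 3}

theorem segBelow_of_add_le (hc : IsTrackCycle c) {i j : ZMod n}
    (hi : cutSign a b (c i).1 (c (i + 1)).1 ≠ 0) (hj : cutSign a b (c j).1 (c (j + 1)).1 ≠ 0)
    (h : (c i).2 + (c (i + 1)).2 ≤ (c j).2 + (c (j + 1)).2) :
    SegBelow (c i) (c (i + 1)) (c j) (c (j + 1)) :=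
  _root_.segBelow_of_add_le (cutSign_ne_zero_iff.mp hi) (cutSign_ne_zero_iff.mp hj)
    (hc.not_segmentsCross i j) h

theorem eq_of_add_eq (hc : IsTrackCycle c) (hn : 2 < n) {i j : ZMod n}
    (hi : cutSign a b (c i).1 (c (i + 1)).1 ≠ 0) (hj : cutSign a b (c j).1 (c (j + 1)).1 ≠ 0)
    (h : (c i).2 + (c (i + 1)).2 = (c j).2 + (c (j + 1)).2) : i = j := by
  have heq := (hc.segBelow_of_add_le hi hj h.le).eq_of_segBelow (hc.segBelow_of_add_le hj hi h.ge)
  have hi' := cutSign_ne_zero_iff.mp hi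
  have hj' := cutSign_ne_zero_iff.mp hj
  by_cases hij : (c i).1 = (c j).1
  · exact hc.injective (heq _ (by simp) _ (by simp) hij)
  · have h₁ : i = j + 1 := hc.injective (heq _ (by simp) _ (by simp) (by grind))
    have h₂ : i + 1 = j := hc.injective (heq _ (by simp) _ (by simp) (by grind))
    have h₃ := congrArg ZMod.val (by linear_combination h₂ - h₁ : (2 : ZMod n) = 0)
    rw [ZMod.val_two_eq_two_mod, Nat.mod_eq_of_lt hn, ZMod.val_zero] at h₃
    exact absurd h₃ two_ne_zero

-- Otherwise the new segments of the reconnection at `i` and `j` would cross each other (the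
-- two arcs point the same way) and nothing else (every other arc lies below or above both).
theorem exists_add_between [NeZero n] (hc : IsTrackCycle c) (hn : 2 < n) {i j : ZMod n}
    (hi : cutSign a b (c i).1 (c (i + 1)).1 ≠ 0) (hj : cutSign a b (c j).1 (c (j + 1)).1 ≠ 0)
    (hlt : (c i).2 + (c (i + 1)).2 < (c j).2 + (c (j + 1)).2)
    (hσ : cutSign a b (c i).1 (c (i + 1)).1 = cutSign a b (c j).1 (c (j + 1)).1) :
    ∃ k, cutSign a b (c k).1 (c (k + 1)).1 ≠ 0 ∧ (c i).2 + (c (i + 1)).2 < (c k).2 + (c (k + 1)).2 ∧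
      (c k).2 + (c (k + 1)).2 < (c j).2 + (c (j + 1)).2 := by
  by_contra! hgap
  have hij : i ≠ j := fun h => hlt.ne (h ▸ rfl)
  obtain ⟨hti, hti'⟩ := eq_and_eq_of_cutSign_eq hi hσ
  have hbelow := hc.segBelow_of_add_le hi hj hlt.le
  have hlt₀ : (c i).2 < (c j).2 := lt_of_le_of_ne (hbelow _ (by simp) _ (by simp) hti)
    fun h => hij (hc.injective (Prod.ext hti h))
  have hlt₁ : (c (i + 1)).2 < (c (j + 1)).2 := lt_of_le_of_ne (hbelow _ (by simp) _ (by simp) hti')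
    fun h => hij (add_right_cancel (hc.injective (Prod.ext hti' h)))
  have hsep : ∀ k, k ≠ i → k ≠ j → ¬ SegmentsCross (c k) (c (k + 1)) (c j) (c (i + 1)) ∧
      ¬ SegmentsCross (c k) (c (k + 1)) (c i) (c (j + 1)) := by
    intro k hki hkj
    by_cases hk : cutSign a b (c k).1 (c (k + 1)).1 = 0
    · have hk' : ¬ ((c k).1 = a ∧ (c (k + 1)).1 = b ∨ (c k).1 = b ∧ (c (k + 1)).1 = a) :=
        fun h => cutSign_ne_zero_iff.mpr h hk
      have := cutSign_ne_zero_iff.mp hi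
      exact ⟨fun h => hk' (by grind [h.tracks]), fun h => hk' (by grind [h.tracks])⟩
    · rcases lt_or_gt_of_ne (fun h => hki (hc.eq_of_add_eq hn hk hi h)) with hk₁ | hk₁
      · have hbi := hc.segBelow_of_add_le hk hi hk₁.le
        have hbj := hc.segBelow_of_add_le hk hj (hk₁.trans hlt).le
        exact ⟨not_segmentsCross_of_segBelow (Or.inl (hbj.mix_right hbi)),
          not_segmentsCross_of_segBelow (Or.inl (hbi.mix_right hbj))⟩
      · have hkj' := lt_of_le_of_ne (hgap k hk hk₁) fun h => hkj (hc.eq_of_add_eq hn hk hj h.symm)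
        have hbi := hc.segBelow_of_add_le hi hk (hlt.trans hkj').le
        have hbj := hc.segBelow_of_add_le hj hk hkj'.le
        exact ⟨not_segmentsCross_of_segBelow (Or.inr (hbj.mix_left hbi)),
          not_segmentsCross_of_segBelow (Or.inr (hbi.mix_left hbj))⟩
  exact hc.not_segmentsCross_reconnection hij (hti' ▸ hc.fst_ne i) (hti ▸ hc.fst_ne i)
    (fun k h₁ h₂ => (hsep k h₁ h₂).1) (fun k h₁ h₂ => (hsep k h₁ h₂).2)
    (Or.inl ⟨hti.symm, hti', Or.inr ⟨hlt₀, hlt₁⟩⟩)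

theorem abs_sum_cutSign_le_one [NeZero n] (hc : IsTrackCycle c) (hn : 2 < n) (a b : Fin 3) :
    |∑ i, cutSign a b (c i).1 (c (i + 1)).1| ≤ 1 := by
  rw [← sum_filter_ne_zero]
  refine abs_sum_le_one_of_alternating _ (fun i => (c i).2 + (c (i + 1)).2) _
    (fun i hi => cutSign_eq_one_or_eq_neg_one (mem_filter.mp hi).2)
    (fun i hi j hj h => hc.eq_of_add_eq hn (mem_filter.mp hi).2 (mem_filter.mp hj).2 h) ?_
  intro i hi j hj hlt hσ
  obtain ⟨k, hk, h⟩ := hc.exists_add_between hn (mem_filter.mp hi).2 (mem_filter.mp hj).2 hlt hσ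
  exact ⟨k, mem_filter.mpr ⟨mem_univ k, hk⟩, h⟩

end IsTrackCycle

namespace TrackLayout

variable {G : SimpleGraph V} {k : ℕ}

def point (T : TrackLayout G k) (v : V) : Fin k × ℕ := (T.track v, T.pos v)

theorem point_injective (T : TrackLayout G k) : Injective T.point :=
  fun u v h => T.pos_inj u v (congrArg Prod.fst h) (congrArg Prod.snd h)

theorem not_segmentsCross (T : TrackLayout G k) {u v u' v' : V} (h : G.Adj u v)
    (h' : G.Adj u' v') : ¬ SegmentsCross (T.point u) (T.point v) (T.point u') (T.point v') := by
  rintro (⟨h₁, h₂, ⟨h₃, h₄⟩ | ⟨h₃, h₄⟩⟩ | ⟨h₁, h₂, ⟨h₃, h₄⟩ | ⟨h₃, h₄⟩⟩)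
  · exact T.noncross u v u' v' h h' h₁ h₂ h₃ h₄
  · exact T.noncross u' v' u v h' h h₁.symm h₂.symm h₃ h₄
  · exact T.noncross u v v' u' h h'.symm h₁ h₂ h₃ h₄
  · exact T.noncross v' u' u v h'.symm h h₁.symm h₂.symm h₃ h₄

end TrackLayout

namespace SimpleGraph.Walk

variable {G : SimpleGraph V} {v : V}

def cyclicVert (p : G.Walk v v) (k : ZMod p.length) : V := p.getVert k.val

variable (p : G.Walk v v) [NeZero p.length]

theorem cyclicVert_add_one (k : ZMod p.length) :
    p.cyclicVert (k + 1) = p.getVert (k.val + 1) := by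
  by_cases hk : k = -1
  · rw [hk, neg_add_cancel, cyclicVert, ZMod.val_zero, getVert_zero, ZMod.val_neg_one_of_neZero,
      Nat.sub_add_cancel NeZero.one_le, getVert_length]
  · rw [cyclicVert, ZMod.val_add_one_of_ne_neg_one hk]

theorem adj_cyclicVert (k : ZMod p.length) : G.Adj (p.cyclicVert k) (p.cyclicVert (k + 1)) := by
  rw [cyclicVert_add_one]
  exact p.adj_getVert_succ (ZMod.val_lt k)

theorem sum_range_length_eq_sum_cyclicVert {M : Type*} [AddCommMonoid M] (f : V → V → M) :
    ∑ k ∈ range p.length, f (p.getVert k) (p.getVert (k + 1)) =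
      ∑ k, f (p.cyclicVert k) (p.cyclicVert (k + 1)) := by
  simp only [cyclicVert_add_one]
  exact (ZMod.sum_val_eq_sum_range fun k => f (p.getVert k) (p.getVert (k + 1))).symm

theorem IsCycle.isTrackCycle {p : G.Walk v v} [NeZero p.length] (hp : p.IsCycle)
    (T : TrackLayout G 3) : IsTrackCycle fun k => T.point (p.cyclicVert k) where
  fst_ne k := T.indep _ _ (p.adj_cyclicVert k)
  injective k k' h := ZMod.val_injective _ (hp.getVert_injOn'
    (Nat.le_sub_one_of_lt (ZMod.val_lt k)) (Nat.le_sub_one_of_lt (ZMod.val_lt k'))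
    (T.point_injective h))
  not_segmentsCross i j := T.not_segmentsCross (p.adj_cyclicVert i) (p.adj_cyclicVert j)

end SimpleGraph.Walk

section Delta

variable {G : SimpleGraph V}

theorem trackDelta_eq (T : TrackLayout G 3) {u v : V} (h : G.Adj u v) :
    trackDelta T u v =
      ((T.track v : ℕ) : ℤ) - (T.track u : ℕ) + 3 * cutSign 2 0 (T.track u) (T.track v) := by
  have key : ∀ s t : Fin 3, s ≠ t →
      (if t = s + 1 then (1 : ℤ) else -1) = ((t : ℕ) : ℤ) - (s : ℕ) + 3 * cutSign 2 0 s t := by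
    decide
  exact key _ _ (T.indep u v h)

theorem walkDelta_eq_sum (T : TrackLayout G 3) {u v : V} (p : G.Walk u v) :
    walkDelta T p = ∑ k ∈ range p.length, trackDelta T (p.getVert k) (p.getVert (k + 1)) := by
  induction p with
  | nil => simp [walkDelta]
  | cons h q ih => rw [walkDelta, ih, Walk.length_cons, sum_range_succ', add_comm]; simp

theorem even_walkDelta_add_length (T : TrackLayout G 3) {u v : V} (p : G.Walk u v) :
    Even (walkDelta T p + p.length) := by
  induction p with
  | nil => simp [walkDelta]
  | @cons a b _ _ q ih =>
    have : trackDelta T a b = 1 ∨ trackDelta T a b = -1 := by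
      unfold trackDelta; split_ifs <;> simp
    rw [Int.even_iff] at ih ⊢
    rw [walkDelta, Walk.length_cons, Nat.cast_succ]
    omega

theorem walkDelta_eq_three_mul (T : TrackLayout G 3) {v : V} (p : G.Walk v v)
    [NeZero p.length] :
    walkDelta T p =
      3 * ∑ k, cutSign 2 0 (T.track (p.cyclicVert k)) (T.track (p.cyclicVert (k + 1))) := by
  rw [walkDelta_eq_sum, p.sum_range_length_eq_sum_cyclicVert (trackDelta T)]
  simp only [trackDelta_eq T (p.adj_cyclicVert _), sum_add_distrib, sum_sub_distrib, ← mul_sum]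
  rw [ZMod.sum_comp_add_one fun k => ((T.track (p.cyclicVert k) : ℕ) : ℤ), sub_self, zero_add]

end Delta

/-- In any 3-track layout, for any cyclically oriented cycle `C`, the sum of `δ`
over the arcs of `C` is `0` if `C` is even and has absolute value `3` if `C` is odd. -/
theorem stmt0 (G : SimpleGraph V) (T : TrackLayout G 3) (v : V)
    (c : G.Walk v v) (hc : c.IsCycle) :
    (Even c.length → walkDelta T c = 0) ∧
    (Odd c.length → |walkDelta T c| = 3) := by
  have hn := hc.three_le_length
  have : NeZero c.length := ⟨by omega⟩
  obtain ⟨W, hW, hδ⟩ : ∃ W : ℤ, |W| ≤ 1 ∧ walkDelta T c = 3 * W :=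
    ⟨_, (hc.isTrackCycle T).abs_sum_cutSign_le_one (by omega) 2 0, walkDelta_eq_three_mul T c⟩
  have hpar := even_walkDelta_add_length T c
  rw [hδ, Int.even_iff] at hpar
  rw [abs_le] at hW
  rw [hδ]
  refine ⟨fun ⟨r, hr⟩ => by omega, fun ⟨r, hr⟩ => ?_⟩
  rcases (by omega : W = 1 ∨ W = -1) with rfl | rfl <;> norm_num
end

section
/- For every h ≥ 0, the graph obtained from the complete binary tree of height h by adding one universal vertex adjacent to all tree vertices has layered pathwidth Ω(h); in particular, the family of tree-apex graphs has unbounded layered pathwidth. -/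
/-!
Every vertex of an apex graph is adjacent to the apex, so a layering of it has at most three
nonempty layers, and a layered path decomposition of width `k` restricts to a path
decomposition of the underlying graph with bags of size at most `3 k`.

In a path decomposition of the complete binary tree, for a node `s` with at least `2 p` levels
below it, some bag meets the subtree of `s` in at least `p + 1` vertices. Among three
grandchildren of `s`, take the one whose large bag lies between the large bags of the other two:
the path joining those two through `s` avoids its subtree yet passes through that bag, adding a
vertex. So some bag has at least `h / 2 + 1` vertices, which forces `h < 6 k`.
-/

open SimpleGraph

universe u

variable {V : Type u}

section PathDecomposition

variable {α β : Type*} {G : SimpleGraph α} {H : SimpleGraph β}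

def PathDecomp.comap (f : G →g H) (P : PathDecomp H) : PathDecomp G where
  bags i := f ⁻¹' P.bags i
  mem_bag v := P.mem_bag (f v)
  contiguous v i j k := P.contiguous (f v) i j k
  edge_bag _ _ huv := P.edge_bag _ _ (f.map_adj huv)

lemma PathDecomp.exists_mem_support_mem_bags_of_le (P : PathDecomp G) :
    ∀ {x z : α} (W : G.Walk x z) {i j k : ℕ}, i ≤ j → j ≤ k →
      x ∈ P.bags i → z ∈ P.bags k → ∃ w ∈ W.support, w ∈ P.bags j
  | x, _, .nil, _, _, _, hij, hjk, hx, hz =>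
    ⟨x, by simp, P.contiguous x _ _ _ hij hjk hx hz⟩
  | x, _, .cons hadj W, _, j, _, hij, hjk, hx, hz => by
    obtain ⟨m, hxm, hym⟩ := P.edge_bag _ _ hadj
    by_cases hjm : j ≤ m
    · exact ⟨x, by simp, P.contiguous x _ _ _ hij hjm hx hxm⟩
    · obtain ⟨w, hw, hwj⟩ :=
        P.exists_mem_support_mem_bags_of_le W (le_of_not_ge hjm) hjk hym hz
      exact ⟨w, by simp [hw], hwj⟩

lemma PathDecomp.exists_mem_support_mem_bags (P : PathDecomp G) {x z : α} (W : G.Walk x z)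
    {i j k : ℕ} (hj : j ∈ Set.uIcc i k) (hx : x ∈ P.bags i) (hz : z ∈ P.bags k) :
    ∃ w ∈ W.support, w ∈ P.bags j := by
  rcases Set.mem_uIcc.1 hj with ⟨hij, hjk⟩ | ⟨hkj, hji⟩
  · exact P.exists_mem_support_mem_bags_of_le W hij hjk hx hz
  · obtain ⟨w, hw, hwj⟩ := P.exists_mem_support_mem_bags_of_le W.reverse hkj hji hz hx
    exact ⟨w, by simpa using hw, hwj⟩

lemma layeredPathwidthLE_card [Finite α] (G : SimpleGraph α) :
    LayeredPathwidthLE G (Nat.card α) := by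
  refine ⟨⟨fun _ => Set.univ, fun _ => ⟨0, trivial⟩, fun _ _ _ _ _ _ _ _ => trivial,
    fun _ _ _ => ⟨0, trivial, trivial⟩⟩, fun _ => 0, fun _ _ _ => by simp, fun _ _ => ?_⟩
  exact (Set.ncard_le_ncard (Set.subset_univ _)).trans (Set.ncard_univ α).le

lemma layeredPathwidthLE_layeredPathwidth [Finite α] (G : SimpleGraph α) :
    LayeredPathwidthLE G (layeredPathwidth G) :=
  Nat.sInf_mem (s := {k | LayeredPathwidthLE G k}) ⟨_, layeredPathwidthLE_card G⟩

end PathDecomposition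

section Apex

variable {α : Type*} {G : SimpleGraph α}

def apexGraph.someHom (G : SimpleGraph α) : G →g apexGraph G :=
  ⟨some, fun hab => Or.inl ⟨_, _, rfl, rfl, hab⟩⟩

lemma IsLayering.abs_sub_apex_le_one {lev : Option α → ℤ} (hlev : IsLayering (apexGraph G) lev)
    (v : Option α) : |lev v - lev none| ≤ 1 := by
  cases v with
  | none => simp
  | some a => exact hlev _ _ (Or.inr (Or.inr ⟨rfl, a, rfl⟩))

lemma IsLayering.ncard_le_three_mul_apexGraph {lev : Option α → ℤ}
    (hlev : IsLayering (apexGraph G) lev) {B : Set (Option α)} {k : ℕ}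
    (hB : ∀ l, {v | v ∈ B ∧ lev v = l}.ncard ≤ k) : B.ncard ≤ 3 * k := by
  set L := lev none
  have hB_eq : B = {v | v ∈ B ∧ lev v = L - 1} ∪ {v | v ∈ B ∧ lev v = L} ∪
      {v | v ∈ B ∧ lev v = L + 1} := by
    ext v
    have := abs_le.1 (hlev.abs_sub_apex_le_one v)
    simp only [Set.mem_union, Set.mem_ofPred_eq]
    constructor
    · intro hv
      have : lev v = L - 1 ∨ lev v = L ∨ lev v = L + 1 := by omega
      tauto
    · rintro ((⟨hv, -⟩ | ⟨hv, -⟩) | ⟨hv, -⟩) <;> exact hv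
  calc B.ncard
      ≤ {v | v ∈ B ∧ lev v = L - 1}.ncard + {v | v ∈ B ∧ lev v = L}.ncard +
          {v | v ∈ B ∧ lev v = L + 1}.ncard := by
        conv_lhs => rw [hB_eq]
        exact (Set.ncard_union_le _ _).trans (Nat.add_le_add_right (Set.ncard_union_le _ _) _)
    _ ≤ 3 * k := by linarith [hB (L - 1), hB L, hB (L + 1)]

lemma LayeredPathwidthLE.exists_pathDecomp_apexGraph [Finite α] {k : ℕ}
    (hG : LayeredPathwidthLE (apexGraph G) k) :
    ∃ P : PathDecomp G, ∀ i, (P.bags i).ncard ≤ 3 * k := by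
  obtain ⟨P, lev, hlev, hk⟩ := hG
  refine ⟨P.comap (apexGraph.someHom G), fun i => ?_⟩
  calc (some ⁻¹' P.bags i).ncard ≤ (P.bags i).ncard :=
        Set.ncard_le_ncard_of_injOn some (fun _ ha => ha) (Option.some_injective α).injOn
    _ ≤ 3 * k := hlev.ncard_le_three_mul_apexGraph (hk i)

end Apex

namespace completeBinaryTree

variable {h : ℕ}

instance : Finite {l : List Bool // l.length ≤ h} :=
  (List.finite_length_le Bool h).to_subtype

def descendants (h : ℕ) (s : List Bool) : Set {l : List Bool // l.length ≤ h} :=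
  {v | s <+: v.1}

lemma exists_walk_of_prefix {u v : {l : List Bool // l.length ≤ h}} (huv : u.1 <+: v.1) :
    ∃ W : (completeBinaryTree h).Walk u v, ∀ t ∈ W.support, u.1 <+: t.1 ∧ t.1 <+: v.1 := by
  obtain ⟨r, hr⟩ := huv
  induction r generalizing u with
  | nil =>
    obtain rfl : u = v := Subtype.ext (by simpa using hr)
    exact ⟨.nil, by simp⟩
  | cons b r ih =>
    have hr' : u.1 ++ [b] ++ r = v.1 := by simpa using hr
    let u' : {l : List Bool // l.length ≤ h} :=
      ⟨u.1 ++ [b], (List.prefix_append _ r).length_le.trans (hr' ▸ v.2)⟩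
    obtain ⟨W, hW⟩ := ih (u := u') hr'
    have hadj : (completeBinaryTree h).Adj u u' := Or.inl ⟨b, rfl⟩
    refine ⟨.cons hadj W, ?_⟩
    intro t ht
    rw [Walk.support_cons, List.mem_cons] at ht
    rcases ht with rfl | ht
    · exact ⟨List.prefix_refl _, ⟨_, hr⟩⟩
    · exact ⟨(List.prefix_append _ _).trans (hW t ht).1, (hW t ht).2⟩

lemma exists_walk_of_common_prefix {s : List Bool} {x z : {l : List Bool // l.length ≤ h}}
    (hx : s <+: x.1) (hz : s <+: z.1) :
    ∃ W : (completeBinaryTree h).Walk x z,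
      ∀ t ∈ W.support, s <+: t.1 ∧ (t.1 <+: x.1 ∨ t.1 <+: z.1) := by
  let s' : {l : List Bool // l.length ≤ h} := ⟨s, hx.length_le.trans x.2⟩
  obtain ⟨Wx, hWx⟩ := exists_walk_of_prefix (u := s') hx
  obtain ⟨Wz, hWz⟩ := exists_walk_of_prefix (u := s') hz
  refine ⟨Wx.reverse.append Wz, fun t ht => ?_⟩
  rcases (Walk.mem_support_append_iff _ _).1 ht with ht | ht
  · rw [Walk.support_reverse, List.mem_reverse] at ht
    exact ⟨(hWx t ht).1, Or.inl (hWx t ht).2⟩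
  · exact ⟨(hWz t ht).1, Or.inr (hWz t ht).2⟩

lemma not_prefix_of_prefix_of_length_eq {a m x : List Bool} (hax : a <+: x)
    (hlen : a.length = m.length) (ham : a ≠ m) : ¬ m <+: x := fun hmx =>
  ham ((List.prefix_of_prefix_length_le hax hmx hlen.le).eq_of_length hlen)

variable (P : PathDecomp (completeBinaryTree h))

lemma ncard_bags_inter_descendants_lt {s a m b : List Bool} {i j k : ℕ}
    (hsm : s <+: m) (hsa : s <+: a) (hsb : s <+: b)
    (ham : a ≠ m) (hbm : b ≠ m) (hlen_a : a.length = m.length) (hlen_b : b.length = m.length)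
    (hj : j ∈ Set.uIcc i k) {x z : {l : List Bool // l.length ≤ h}}
    (hx : x ∈ P.bags i ∩ descendants h a) (hz : z ∈ P.bags k ∩ descendants h b) :
    (P.bags j ∩ descendants h m).ncard < (P.bags j ∩ descendants h s).ncard := by
  obtain ⟨W, hW⟩ := exists_walk_of_common_prefix (hsa.trans hx.2) (hsb.trans hz.2)
  obtain ⟨t, htW, htj⟩ := P.exists_mem_support_mem_bags W hj hx.1 hz.1
  have hmt : ¬ m <+: t.1 := by
    rcases (hW t htW).2 with htx | htz
    · exact fun hmt => not_prefix_of_prefix_of_length_eq hx.2 hlen_a ham (hmt.trans htx)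
    · exact fun hmt => not_prefix_of_prefix_of_length_eq hz.2 hlen_b hbm (hmt.trans htz)
  have hsub : P.bags j ∩ descendants h m ⊆ P.bags j ∩ descendants h s :=
    Set.inter_subset_inter_right _ fun v hv => hsm.trans hv
  exact Set.ncard_lt_ncard ((Set.ssubset_iff_of_subset hsub).2
    ⟨t, ⟨htj, (hW t htW).1⟩, fun ht => hmt ht.2⟩)

lemma exists_le_ncard_bags_inter_descendants :
    ∀ (p : ℕ) (s : List Bool), s.length + 2 * p ≤ h →
      ∃ i, p + 1 ≤ (P.bags i ∩ descendants h s).ncard := by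
  intro p
  induction p with
  | zero =>
    intro s hs
    obtain ⟨i, hi⟩ := P.mem_bag ⟨s, by omega⟩
    exact ⟨i, (Set.ncard_pos (Set.toFinite _)).2 ⟨_, hi, List.prefix_refl s⟩⟩
  | succ p ih =>
    intro s hs
    obtain ⟨i₁, hi₁⟩ := ih (s ++ [false, false]) (by simp; omega)
    obtain ⟨i₂, hi₂⟩ := ih (s ++ [false, true]) (by simp; omega)
    obtain ⟨i₃, hi₃⟩ := ih (s ++ [true, false]) (by simp; omega)
    obtain ⟨x₁, hx₁⟩ := (Set.ncard_pos (Set.toFinite _)).1 ((Nat.succ_pos p).trans_le hi₁)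
    obtain ⟨x₂, hx₂⟩ := (Set.ncard_pos (Set.toFinite _)).1 ((Nat.succ_pos p).trans_le hi₂)
    obtain ⟨x₃, hx₃⟩ := (Set.ncard_pos (Set.toFinite _)).1 ((Nat.succ_pos p).trans_le hi₃)
    have hpre (c : List Bool) : s <+: s ++ c := List.prefix_append s c
    have hmedian : i₁ ∈ Set.uIcc i₂ i₃ ∨ i₂ ∈ Set.uIcc i₁ i₃ ∨ i₃ ∈ Set.uIcc i₁ i₂ := by
      simp only [Set.mem_uIcc]; omega
    rcases hmedian with hj | hj | hj
    · exact ⟨i₁, hi₁.trans_lt (ncard_bags_inter_descendants_lt P (hpre _) (hpre _) (hpre _)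
        (by simp) (by simp) (by simp) (by simp) hj hx₂ hx₃)⟩
    · exact ⟨i₂, hi₂.trans_lt (ncard_bags_inter_descendants_lt P (hpre _) (hpre _) (hpre _)
        (by simp) (by simp) (by simp) (by simp) hj hx₁ hx₃)⟩
    · exact ⟨i₃, hi₃.trans_lt (ncard_bags_inter_descendants_lt P (hpre _) (hpre _) (hpre _)
        (by simp) (by simp) (by simp) (by simp) hj hx₁ hx₂)⟩

lemma exists_le_ncard_bags : ∃ i, h / 2 + 1 ≤ (P.bags i).ncard := by
  obtain ⟨i, hi⟩ := exists_le_ncard_bags_inter_descendants P (h / 2) [] (by simp; omega)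
  exact ⟨i, hi.trans (Set.ncard_le_ncard Set.inter_subset_left)⟩

end completeBinaryTree

lemma lt_six_mul_of_layeredPathwidthLE {h k : ℕ}
    (hk : LayeredPathwidthLE (apexGraph (completeBinaryTree h)) k) : h < 6 * k := by
  obtain ⟨P, hP⟩ := hk.exists_pathDecomp_apexGraph
  obtain ⟨i, hi⟩ := completeBinaryTree.exists_le_ncard_bags P
  have := hP i
  omega

/-- The apex of the complete binary tree of height `h` has layered pathwidth `Ω(h)`;
in particular, tree-apex graphs have unbounded layered pathwidth. -/
theorem stmt11 :
    (∃ c : ℝ, 0 < c ∧ ∀ h : ℕ,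
        c * h ≤ (layeredPathwidth (apexGraph (completeBinaryTree h)) : ℝ)) ∧
    (∀ k : ℕ, ∃ h : ℕ,
        ¬ LayeredPathwidthLE (apexGraph (completeBinaryTree h)) k) := by
  refine ⟨⟨1 / 6, by norm_num, fun h => ?_⟩, fun k => ⟨6 * k, fun hk => ?_⟩⟩
  · have : h < 6 * layeredPathwidth (apexGraph (completeBinaryTree h)) :=
      lt_six_mul_of_layeredPathwidthLE (layeredPathwidthLE_layeredPathwidth _)
    have : (h : ℝ) ≤ 6 * layeredPathwidth (apexGraph (completeBinaryTree h)) := by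
      exact_mod_cast this.le
    linarith
  · exact (lt_six_mul_of_layeredPathwidthLE hk).false
end
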